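/- With N, ⟨·,·⟩, h, F, V as in the context, let n = 2m ≥ 4 and dim_K N = n. Let M ⊂ N be a π-modular O_K-lattice admitting a standard normal basis, with π₀M ⊆ VM ⊆ M, the O_K-length of M/VM equal to n, and VM of colength 1 in VM + πM. Let e ∈ N satisfy h(e,e) = δ for a unit δ ∈ O_{K₀}^× with σ(δ) = −δ, Ve = Fe = −πe, πe ∈ M, and e ∉ M. Set W := {x ∈ N : h(x,e) = 0} and L := π·((M ∩ W)*), the dual (M ∩ W)* being taken inside W. Then L is an almost π-modular O_K-lattice in W satisfying: πL* ⊞ O_K·(πe) has colength 1 in M and M has colength 1 in L ⊞ O_K·e; moreover VL ⊆ L, π₀L ⊆ VL, and VL has colength at most 1 in VL + πL. -/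

import Mathlib

/-!
Since `h(e,e)` is a unit, `N = e^⊥ ⊕ K e`, and the orthogonal projection `p` onto `W = e^⊥`
moves elements of `M` only by `O`-multiples of `e`. As `πe ∈ M` but `e ∉ M`, `π`-modularity
gives `y₀ ∈ M` with `h(y₀, e)` a unit, so `M = (M ∩ W) + O y₀`. Hence
`L = π (M ∩ W)^* = p(M) = (M ∩ W) + O p(y₀)` and `L^* = π⁻¹ (M ∩ W)`, and each colength
statement is an instance of: if `π v ∈ A` and `v ∉ A`, then `A` has colength one in `A + O v`.
Finally `V` preserves `W` and `Ve ∈ K e`, so `c w = V t` forces `c p(w) = V p(t)` (both sides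
lie in `W` and differ by a multiple of `e`); this transports `VM ⊆ M`, `π₀ M ⊆ VM` and the
colength condition on `VM + πM` from `M` to `L = p(M)`.
-/

noncomputable section

/-- The hermitian form `h(x,y) = ⟨πx,y⟩ + π⟨x,y⟩` attached to the alternating form. -/
def hermOf {K N : Type*} [Field K] [AddCommGroup N] [Module K N]
    (πK : K) (form : N → N → K) : N → N → K :=
  fun x y => form (πK • x) y + πK * form x y

/-- Gram matrix of a standard normal basis of a π-modular lattice of rank `2m`:
the only nonzero pairings are `h(eᵢ,fᵢ) = -π` and `h(fᵢ,eᵢ) = π`. -/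
def piGram {K : Type*} [Field K] (πK : K) (m : ℕ) :
    Fin m × Fin 2 → Fin m × Fin 2 → K := fun x y =>
  if x.1 = y.1 then
    if x.2 = 0 ∧ y.2 = 1 then -πK
    else if x.2 = 1 ∧ y.2 = 0 then πK
    else 0
  else 0

/-- The dual, inside `W = v^⊥`, of a subset `S ⊆ W`:
`{x ∈ W | h(x,y) ∈ O_K for all y ∈ S}`. -/
def dualSetInPerp {K O N : Type*} [Field K] [CommRing O] [Algebra O K]
    [AddCommGroup N] [Module K N]
    (h : N → N → K) (S : Set N) (v : N) : Set N :=
  {x : N | h x v = 0 ∧ ∀ y ∈ S, h x y ∈ Set.range (algebraMap O K)}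

/-- `Q` has length `n` as an `O`-module (via composition series). -/
def moduleLengthEq (O Q : Type*) [Ring O] [AddCommGroup Q] [Module O Q] (n : ℕ) : Prop :=
  ∃ s : CompositionSeries (Submodule O Q), s.head = ⊥ ∧ s.last = ⊤ ∧ s.length = n

/-- `A` has colength one in `B` (as `O`-stable subsets of `N`). -/
def colengthOne (O : Type*) {N : Type*} [CommRing O] [AddCommGroup N] [Module O N]
    (A B : Set N) : Prop :=
  A ⊆ B ∧ A ≠ B ∧ ∀ x ∈ B, x ∉ A → ∀ y ∈ B, ∃ a : O, y - a • x ∈ A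

/-- `A` has colength at most one in `B` (as `O`-stable subsets of `N`). -/
def colengthLeOne (O : Type*) {N : Type*} [CommRing O] [AddCommGroup N] [Module O N]
    (A B : Set N) : Prop :=
  A ⊆ B ∧ ∀ x ∈ B, x ∉ A → ∀ y ∈ B, ∃ a : O, y - a • x ∈ A

structure IsHermitianForm {K N : Type*} [Field K] [AddCommGroup N] [Module K N]
    (conj : K ≃+* K) (h : N → N → K) : Prop where
  add_left : ∀ x y z, h (x + y) z = h x z + h y z
  smul_left : ∀ (a : K) x y, h (a • x) y = a * h x y
  conj_apply : ∀ x y, conj (h x y) = h y x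

namespace IsHermitianForm

variable {K N : Type*} [Field K] [AddCommGroup N] [Module K N] {conj : K ≃+* K}
  {h : N → N → K}

theorem zero_left (hh : IsHermitianForm conj h) (y : N) : h 0 y = 0 := by
  simpa using hh.smul_left 0 0 y

theorem sub_left (hh : IsHermitianForm conj h) (x y z : N) : h (x - y) z = h x z - h y z := by
  rw [sub_eq_add_neg, hh.add_left, ← neg_one_smul K y, hh.smul_left]; ring

theorem add_right (hh : IsHermitianForm conj h) (x y z : N) : h x (y + z) = h x y + h x z := by
  rw [← hh.conj_apply, hh.add_left, map_add, hh.conj_apply, hh.conj_apply]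

theorem smul_right (hh : IsHermitianForm conj h) (a : K) (x y : N) :
    h x (a • y) = conj a * h x y := by
  rw [← hh.conj_apply, hh.smul_left, map_mul, hh.conj_apply]

theorem sub_right (hh : IsHermitianForm conj h) (x y z : N) : h x (y - z) = h x y - h x z := by
  rw [← hh.conj_apply, hh.sub_left, map_sub, hh.conj_apply, hh.conj_apply]

theorem eq_zero_comm (hh : IsHermitianForm conj h) {x y : N} (hxy : h x y = 0) : h y x = 0 := by
  rw [← hh.conj_apply, hxy, map_zero]

def perpProj (hh : IsHermitianForm conj h) (e : N) : N →ₗ[K] N where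
  toFun x := x - (h x e / h e e) • e
  map_add' x y := by rw [hh.add_left, add_div, add_smul]; abel
  map_smul' a x := by rw [hh.smul_left, mul_div_assoc, smul_sub, smul_smul]; rfl

theorem perpProj_apply (hh : IsHermitianForm conj h) (e x : N) :
    hh.perpProj e x = x - (h x e / h e e) • e := rfl

theorem perpProj_perp (hh : IsHermitianForm conj h) {e : N} (he : h e e ≠ 0) (x : N) :
    h (hh.perpProj e x) e = 0 := by
  rw [perpProj_apply, hh.sub_left, hh.smul_left, div_mul_cancel₀ _ he, sub_self]

theorem perpProj_of_perp (hh : IsHermitianForm conj h) {e x : N} (hx : h x e = 0) :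
    hh.perpProj e x = x := by
  rw [perpProj_apply, hx, zero_div, zero_smul, sub_zero]

theorem perpProj_self (hh : IsHermitianForm conj h) {e : N} (he : h e e ≠ 0) :
    hh.perpProj e e = 0 := by
  rw [perpProj_apply, div_self he, one_smul, sub_self]

theorem apply_perpProj_right (hh : IsHermitianForm conj h) {e x : N} (hx : h x e = 0) (y : N) :
    h x (hh.perpProj e y) = h x y := by
  rw [perpProj_apply, hh.sub_right, hh.smul_right, hx, mul_zero, sub_zero]

def perp (hh : IsHermitianForm conj h) (e : N) : Submodule K N where
  carrier := {x | h x e = 0}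
  add_mem' {x y} (hx : h x e = 0) (hy : h y e = 0) :=
    show h (x + y) e = 0 by rw [hh.add_left, hx, hy, add_zero]
  zero_mem' := hh.zero_left e
  smul_mem' a x (hx : h x e = 0) := show h (a • x) e = 0 by rw [hh.smul_left, hx, mul_zero]

theorem eq_of_perp_of_sub_eq_smul (hh : IsHermitianForm conj h) {e x y : N} (he : h e e ≠ 0)
    (hx : h x e = 0) (hy : h y e = 0) {c : K} (hxy : x - y = c • e) : x = y := by
  have : c * h e e = 0 := by rw [← hh.smul_left, ← hxy, hh.sub_left, hx, hy, sub_zero]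
  rw [← sub_eq_zero, hxy, (mul_eq_zero.1 this).resolve_right he, zero_smul]

theorem smul_perpProj_eq_of_smul_eq (hh : IsHermitianForm conj h) {e : N} (he : h e e ≠ 0)
    {τ : K →+* K} (V : N →ₛₗ[τ] N) {b : K} (hVe : V e = b • e)
    (hVW : ∀ x, h x e = 0 → h (V x) e = 0) {c : K} {w t : N} (hwt : c • w = V t) :
    c • hh.perpProj e w = V (hh.perpProj e t) := by
  refine hh.eq_of_perp_of_sub_eq_smul he
    (by rw [hh.smul_left, hh.perpProj_perp he, mul_zero]) (hVW _ (hh.perpProj_perp he t))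
    (c := τ (h t e / h e e) * b - c * (h w e / h e e)) ?_
  rw [perpProj_apply, perpProj_apply, smul_sub, hwt, map_sub, map_smulₛₗ, hVe, smul_smul,
    smul_smul, sub_smul]
  abel

theorem apply_eq_zero_of_adjoint (hh : IsHermitianForm conj h) {F V : N → N} {σ : K →+* K}
    (hF : ∀ x y, h (F x) y = σ (h x (V y))) {e : N} {c : K} (hFe : F e = c • e) {y : N}
    (hy : h y e = 0) : h (V y) e = 0 := by
  have : σ (h e (V y)) = 0 := by rw [← hF, hFe, hh.smul_left, hh.eq_zero_comm hy, mul_zero]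
  exact hh.eq_zero_comm ((map_eq_zero σ).1 this)

end IsHermitianForm

theorem form_swap {K N : Type*} [CommRing K] [AddCommGroup N] {form : N → N → K}
    (haddl : ∀ x y z : N, form (x + y) z = form x z + form y z)
    (haddr : ∀ x y z : N, form x (y + z) = form x y + form x z)
    (halt : ∀ x : N, form x x = 0) (x y : N) : form y x = -form x y := by
  have := halt (x + y)
  rw [haddl, haddr, haddr, halt, halt] at this
  linear_combination this

section hermOf

variable {K N : Type*} [Field K] [AddCommGroup N] [Module K N] {conj : K ≃+* K} {q : K}
  {form : N → N → K}

theorem form_neg_left (hK₀ : ∀ (a : K) (x y : N), conj a = a → form (a • x) y = a * form x y)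
    (x y : N) : form (-x) y = -form x y := by
  simpa using hK₀ (-1) x y (by simp)

theorem hermOf_add_left (haddl : ∀ x y z : N, form (x + y) z = form x z + form y z)
    (x y z : N) : hermOf q form (x + y) z = hermOf q form x z + hermOf q form y z := by
  simp only [hermOf, smul_add, haddl]; ring

theorem hermOf_smul_left (hconj : ∀ x : K, conj (conj x) = x) (hq : conj q = -q) (hq0 : q ≠ 0)
    (h2 : (2 : K) ≠ 0) (haddl : ∀ x y z : N, form (x + y) z = form x z + form y z)
    (hK₀ : ∀ (a : K) (x y : N), conj a = a → form (a • x) y = a * form x y)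
    (a : K) (x y : N) : hermOf q form (a • x) y = a * hermOf q form x y := by
  have fixed : ∀ c : K, conj c = c → ∀ x, hermOf q form (c • x) y = c * hermOf q form x y := by
    intro c hc x
    simp only [hermOf, smul_comm q c x, hK₀ c _ y hc]; ring
  have hq2 : hermOf q form (q • x) y = q * hermOf q form x y := by
    simp only [hermOf, smul_smul, hK₀ (q * q) x y (by rw [map_mul, hq]; ring)]; ring
  -- `a = s + t q` with `s, t` fixed by `conj`
  set s := (a + conj a) / 2
  set t := (a - conj a) / (2 * q)
  have hs : conj s = s := by simp only [s, map_div₀, map_add, hconj, map_ofNat]; ring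
  have ht : conj t = t := by
    simp only [t, map_div₀, map_sub, map_mul, hconj, map_ofNat, hq]
    field_simp; ring
  have hst : a = s + t * q := by simp only [s, t]; field_simp; ring
  rw [hst, add_smul, mul_smul, hermOf_add_left haddl, fixed s hs, fixed t ht, hq2]; ring

theorem conj_hermOf (haddl : ∀ x y z : N, form (x + y) z = form x z + form y z)
    (haddr : ∀ x y z : N, form x (y + z) = form x y + form x z)
    (hK₀ : ∀ (a : K) (x y : N), conj a = a → form (a • x) y = a * form x y)
    (hswap : ∀ (a : K) (x y : N), form (a • x) y = form x (conj a • y))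
    (halt : ∀ x : N, form x x = 0) (hval : ∀ x y : N, conj (form x y) = form x y)
    (hq : conj q = -q) (x y : N) : conj (hermOf q form x y) = hermOf q form y x := by
  have hqxy : form (q • y) x = form (q • x) y := by
    have := hswap (-q) x y
    rw [map_neg, hq, neg_neg, neg_smul, form_neg_left hK₀] at this
    rw [form_swap haddl haddr halt, ← this, neg_neg]
  simp only [hermOf, map_add, map_mul, hval, hq, hqxy, form_swap haddl haddr halt x y]; ring

theorem two_ne_zero_of_hermOf_ne_zero (hq : conj q = -q)
    (hK₀ : ∀ (a : K) (x y : N), conj a = a → form (a • x) y = a * form x y)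
    (halt : ∀ x : N, form x x = 0) {x : N} (hx : hermOf q form x x ≠ 0) : (2 : K) ≠ 0 := by
  intro h2
  have hq' : conj q = q := by linear_combination hq - q * h2
  exact hx (by simp [hermOf, hK₀ q x x hq', halt])

theorem hermOf_frob_left {σ : K →+* K} {Frob Ver : N → N}
    (hFsemi : ∀ (a : K) (x : N), Frob (a • x) = σ a • Frob x)
    (hFform : ∀ x y : N, form (Frob x) y = σ (form x (Ver y))) (hσq : σ q = q) (x y : N) :
    hermOf q form (Frob x) y = σ (hermOf q form x (Ver y)) := by
  have : q • Frob x = Frob (q • x) := by rw [hFsemi, hσq]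
  simp only [hermOf, this, hFform, map_add, map_mul, hσq]

end hermOf

theorem Irreducible.dvd_of_not_isUnit {O : Type*} [CommRing O] [IsDomain O]
    [IsDiscreteValuationRing O] {π c : O} (hπ : Irreducible π) (hc : ¬IsUnit c) : π ∣ c := by
  have := (IsLocalRing.mem_maximalIdeal c).2 hc
  rwa [hπ.maximalIdeal_eq, Ideal.mem_span_singleton] at this

section Colength

open Submodule

variable {O N N' : Type*} [CommRing O] [AddCommGroup N] [Module O N] [AddCommGroup N']
  [Module O N']

theorem colengthOne_sup_span [IsDomain O] [IsDiscreteValuationRing O] {π : O}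
    (hπ : Irreducible π) {A : Submodule O N} {v : N} (hπv : π • v ∈ A) (hv : v ∉ A) :
    colengthOne O (A : Set N) (A ⊔ O ∙ v : Submodule O N) := by
  refine ⟨SetLike.coe_subset_coe.2 le_sup_left,
    fun hA => hv (by rw [← SetLike.mem_coe, hA]; exact mem_sup_right (mem_span_singleton_self v)),
    ?_⟩
  intro x hx hxA y hy
  obtain ⟨a, ha, _, hb, rfl⟩ := mem_sup.1 hx
  obtain ⟨a', ha', _, hb', rfl⟩ := mem_sup.1 hy
  obtain ⟨b, rfl⟩ := mem_span_singleton.1 hb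
  obtain ⟨b', rfl⟩ := mem_span_singleton.1 hb'
  obtain ⟨b, rfl⟩ : IsUnit b := by
    by_contra hb
    obtain ⟨d, rfl⟩ := hπ.dvd_of_not_isUnit hb
    exact hxA (A.add_mem ha (by rw [mul_comm, mul_smul]; exact A.smul_mem d hπv))
  refine ⟨b' * ↑b⁻¹, ?_⟩
  have : a' + b' • v - (b' * ↑b⁻¹) • (a + (b : O) • v) = a' - (b' * ↑b⁻¹) • a := by
    rw [smul_add, smul_smul, mul_assoc, Units.inv_mul, mul_one]; abel
  rw [this]
  exact A.sub_mem ha' (A.smul_mem _ ha)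

theorem colengthOne.preimage {f : N →ₗ[O] N'} (hf : Function.Surjective f) {A B : Set N'}
    (hAB : colengthOne O A B) : colengthOne O (f ⁻¹' A) (f ⁻¹' B) := by
  obtain ⟨hsub, hne, hgen⟩ := hAB
  refine ⟨Set.preimage_mono hsub, fun heq => hne ?_, fun x hx hxA y hy => ?_⟩
  · rw [← Set.image_preimage_eq A hf, heq, Set.image_preimage_eq B hf]
  · obtain ⟨a, ha⟩ := hgen _ hx hxA _ hy
    exact ⟨a, by simpa using ha⟩

end Colength

/-- `piModular` encodes `M^* = π⁻¹ M`, the dual taken in all of `N`. -/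
structure PiModularPair {K O N : Type*} [Field K] [CommRing O] [Algebra O K] [AddCommGroup N]
    [Module K N] [Module O N] (conj : K ≃+* K) (h : N → N → K) (π : O) (M : Submodule O N)
    (e : N) : Prop where
  isHermitianForm : IsHermitianForm conj h
  irreducible : Irreducible π
  conj_uniformizer : conj (algebraMap O K π) = -algebraMap O K π
  piModular : ∀ x : N,
    (∀ y ∈ M, h x y ∈ Set.range (algebraMap O K)) ↔ algebraMap O K π • x ∈ M
  exists_isUnit_self : ∃ δ : O, IsUnit δ ∧ h e e = algebraMap O K δ
  smul_mem : algebraMap O K π • e ∈ M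
  not_mem : e ∉ M

/-- The lattice `L = π (M ∩ e^⊥)^*` of the statement, the dual taken inside `e^⊥`. -/
def piDualPerp {K O N : Type*} [Field K] [CommRing O] [Algebra O K] [AddCommGroup N]
    [Module K N] [Module O N] (h : N → N → K) (π : O) (M : Submodule O N) (e : N) : Set N :=
  {x | ∃ z ∈ dualSetInPerp (O := O) h {y | y ∈ M ∧ h y e = 0} e, x = algebraMap O K π • z}

namespace PiModularPair

open Submodule

variable {K O N : Type*} [Field K] [CommRing O] [Algebra O K] [AddCommGroup N] [Module K N]
  [Module O N] {conj : K ≃+* K} {h : N → N → K} {π : O} {M : Submodule O N} {e : N}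

local notation "ϖ" => algebraMap O K π

theorem self_ne_zero (S : PiModularPair conj h π M e) : h e e ≠ 0 := by
  obtain ⟨δ, hδ, hee⟩ := S.exists_isUnit_self
  exact hee ▸ (hδ.map (algebraMap O K)).ne_zero

section FractionRing

variable [IsFractionRing O K]

theorem uniformizer_ne_zero (S : PiModularPair conj h π M e) : ϖ ≠ 0 :=
  (map_ne_zero_iff _ (IsFractionRing.injective O K)).2 S.irreducible.ne_zero

theorem apply_mem_range_of_smul_mem (S : PiModularPair conj h π M e) {x y : N} (hy : y ∈ M)
    (hx : ϖ • x ∈ M) : h y x ∈ Set.range (algebraMap O K) := by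
  -- `h(y, x) = -h(π⁻¹ y, π x)` and `π⁻¹ y ∈ M^*`
  have hy' : ϖ • ϖ⁻¹ • y ∈ M := by rwa [smul_inv_smul₀ S.uniformizer_ne_zero]
  obtain ⟨c, hc⟩ := (S.piModular _).2 hy' _ hx
  refine ⟨-c, ?_⟩
  rw [map_neg, hc, S.isHermitianForm.smul_left, S.isHermitianForm.smul_right,
    S.conj_uniformizer, neg_mul, mul_neg, inv_mul_cancel_left₀ S.uniformizer_ne_zero, neg_neg]

theorem exists_eq_uniformizer_mul (S : PiModularPair conj h π M e) {y z : N} (hy : y ∈ M)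
    (hz : z ∈ M) : ∃ c : O, h y z = ϖ * algebraMap O K c := by
  have hy' : ϖ • ϖ⁻¹ • y ∈ M := by rwa [smul_inv_smul₀ S.uniformizer_ne_zero]
  obtain ⟨c, hc⟩ := (S.piModular _).2 hy' z hz
  exact ⟨c, by rw [hc, S.isHermitianForm.smul_left, mul_inv_cancel_left₀ S.uniformizer_ne_zero]⟩

variable [IsDomain O] [IsDiscreteValuationRing O]

theorem exists_isUnit_apply_left (S : PiModularPair conj h π M e) :
    ∃ y ∈ M, ∃ u : O, IsUnit u ∧ h e y = algebraMap O K u := by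
  by_contra! hcon
  -- otherwise `π⁻¹ e` would lie in the dual `π⁻¹ M`
  have : ϖ • ϖ⁻¹ • e ∈ M := (S.piModular _).1 fun y hy => by
    obtain ⟨c, hc⟩ := (S.piModular e).2 S.smul_mem y hy
    obtain ⟨d, rfl⟩ := S.irreducible.dvd_of_not_isUnit fun hu => hcon y hy c hu hc.symm
    exact ⟨d, by rw [S.isHermitianForm.smul_left, ← hc, map_mul,
      inv_mul_cancel_left₀ S.uniformizer_ne_zero]⟩
  exact S.not_mem (by rwa [smul_inv_smul₀ S.uniformizer_ne_zero] at this)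

end FractionRing

variable [IsScalarTower O K N]

def perpLattice (S : PiModularPair conj h π M e) : Submodule O N :=
  M ⊓ (S.isHermitianForm.perp e).restrictScalars O

theorem mem_perpLattice (S : PiModularPair conj h π M e) {x : N} :
    x ∈ S.perpLattice ↔ x ∈ M ∧ h x e = 0 := Iff.rfl

def projLattice (S : PiModularPair conj h π M e) : Submodule O N :=
  M.map ((S.isHermitianForm.perpProj e).restrictScalars O)

theorem perpProj_mem_projLattice (S : PiModularPair conj h π M e) {w : N} (hw : w ∈ M) :
    S.isHermitianForm.perpProj e w ∈ S.projLattice :=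
  mem_map_of_mem hw

theorem perpLattice_le_projLattice (S : PiModularPair conj h π M e) :
    S.perpLattice ≤ S.projLattice :=
  fun _ hx => S.isHermitianForm.perpProj_of_perp (S.mem_perpLattice.1 hx).2 ▸
    S.perpProj_mem_projLattice (S.mem_perpLattice.1 hx).1

theorem perpProj_not_mem (S : PiModularPair conj h π M e) {y : N} (hy : y ∈ M) {u : O}
    (hu : IsUnit u) (hye : h y e = algebraMap O K u) : S.isHermitianForm.perpProj e y ∉ M := by
  obtain ⟨δ, hδ, hee⟩ := S.exists_isUnit_self
  intro hmem
  have hce : (h y e / h e e) • e ∈ M := by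
    simpa [IsHermitianForm.perpProj_apply] using M.sub_mem hy hmem
  have key : e = algebraMap O K (δ * ↑hu.unit⁻¹) • (h y e / h e e) • e := by
    have hδ0 : algebraMap O K δ ≠ 0 := hee ▸ S.self_ne_zero
    rw [smul_smul, hye, hee, map_mul, mul_comm (algebraMap O K δ), mul_assoc,
      mul_div_cancel₀ _ hδ0, ← map_mul, IsUnit.val_inv_mul, map_one, one_smul]
  exact S.not_mem (by rw [key, algebraMap_smul]; exact M.smul_mem _ hce)

variable [IsFractionRing O K]

theorem eq_perpLattice_sup (S : PiModularPair conj h π M e) {y₀ : N} (hy₀ : y₀ ∈ M) {u : O}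
    (hu : IsUnit u) (hy₀e : h y₀ e = algebraMap O K u) : M = S.perpLattice ⊔ O ∙ y₀ := by
  refine le_antisymm (fun y hy => ?_) (sup_le inf_le_left ((span_singleton_le_iff_mem _ _).2 hy₀))
  obtain ⟨c, hc⟩ := S.apply_mem_range_of_smul_mem hy S.smul_mem
  refine mem_sup.2 ⟨y - (c * ↑hu.unit⁻¹) • y₀,
    S.mem_perpLattice.2 ⟨M.sub_mem hy (M.smul_mem _ hy₀), ?_⟩, _, mem_span_singleton.2 ⟨_, rfl⟩,
    sub_add_cancel _ _⟩
  rw [S.isHermitianForm.sub_left, ← algebraMap_smul K (c * _) y₀, S.isHermitianForm.smul_left,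
    hy₀e, ← hc, ← map_mul, mul_assoc, IsUnit.val_inv_mul, mul_one, sub_self]

theorem exists_perpProj_eq_sub_smul (S : PiModularPair conj h π M e) {w : N} (hw : w ∈ M) :
    ∃ c : O, S.isHermitianForm.perpProj e w = w - c • e := by
  obtain ⟨δ, hδ, hee⟩ := S.exists_isUnit_self
  obtain ⟨c, hc⟩ := S.apply_mem_range_of_smul_mem hw S.smul_mem
  have : h w e / h e e = algebraMap O K (c * ↑hδ.unit⁻¹) := by
    rw [div_eq_iff S.self_ne_zero, hee, ← map_mul, mul_assoc, IsUnit.val_inv_mul, mul_one, hc]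
  exact ⟨_, by rw [IsHermitianForm.perpProj_apply, this, algebraMap_smul]⟩

theorem smul_perpProj_mem_perpLattice (S : PiModularPair conj h π M e) {w : N} (hw : w ∈ M) :
    ϖ • S.isHermitianForm.perpProj e w ∈ S.perpLattice := by
  obtain ⟨c, hc⟩ := S.exists_perpProj_eq_sub_smul hw
  refine S.mem_perpLattice.2 ⟨?_, ?_⟩
  · rw [hc, smul_sub, smul_comm, algebraMap_smul]
    exact M.sub_mem (M.smul_mem π hw) (M.smul_mem c S.smul_mem)
  · rw [S.isHermitianForm.smul_left, S.isHermitianForm.perpProj_perp S.self_ne_zero, mul_zero]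

theorem projLattice_eq_perpLattice_sup (S : PiModularPair conj h π M e) {y₀ : N} (hy₀ : y₀ ∈ M)
    {u : O} (hu : IsUnit u) (hy₀e : h y₀ e = algebraMap O K u) :
    S.projLattice = S.perpLattice ⊔ O ∙ S.isHermitianForm.perpProj e y₀ := by
  have hfix : S.perpLattice.map ((S.isHermitianForm.perpProj e).restrictScalars O) =
      S.perpLattice := by
    ext x
    refine ⟨?_, fun hx => ⟨x, hx, S.isHermitianForm.perpProj_of_perp (S.mem_perpLattice.1 hx).2⟩⟩
    rintro ⟨y, hy, rfl⟩
    rwa [LinearMap.restrictScalars_apply,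
      S.isHermitianForm.perpProj_of_perp (S.mem_perpLattice.1 hy).2]
  have := congrArg (map ((S.isHermitianForm.perpProj e).restrictScalars O))
    (S.eq_perpLattice_sup hy₀ hu hy₀e)
  rwa [Submodule.map_sup, hfix, map_span, Set.image_singleton,
    LinearMap.restrictScalars_apply] at this

theorem mem_dualSetInPerp_projLattice (S : PiModularPair conj h π M e) {x : N} :
    x ∈ dualSetInPerp (O := O) h S.projLattice e ↔ ϖ • x ∈ S.perpLattice := by
  have hH := S.isHermitianForm
  rw [mem_perpLattice, hH.smul_left, mul_eq_zero, or_iff_right S.uniformizer_ne_zero]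
  constructor
  · rintro ⟨hxe, hx⟩
    refine ⟨(S.piModular x).1 fun w hw => ?_, hxe⟩
    rw [← hH.apply_perpProj_right hxe]
    exact hx _ (S.perpProj_mem_projLattice hw)
  · rintro ⟨hxM, hxe⟩
    refine ⟨hxe, ?_⟩
    rintro _ ⟨w, hw, rfl⟩
    rw [LinearMap.restrictScalars_apply, hH.apply_perpProj_right hxe]
    exact (S.piModular x).2 hxM w hw

theorem setOf_smul_add_smul_eq (S : PiModularPair conj h π M e) :
    {x | ∃ z ∈ dualSetInPerp (O := O) h S.projLattice e, ∃ a : O, x = ϖ • z + a • (ϖ • e)} =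
      (S.perpLattice ⊔ O ∙ (ϖ • e) : Submodule O N) := by
  ext x
  simp only [Set.mem_ofPred_eq, SetLike.mem_coe, mem_sup, mem_span_singleton,
    S.mem_dualSetInPerp_projLattice]
  constructor
  · rintro ⟨z, hz, a, rfl⟩
    exact ⟨_, hz, _, ⟨a, rfl⟩, rfl⟩
  · rintro ⟨m, hm, _, ⟨a, rfl⟩, rfl⟩
    exact ⟨ϖ⁻¹ • m, by rwa [smul_inv_smul₀ S.uniformizer_ne_zero], a,
      by rw [smul_inv_smul₀ S.uniformizer_ne_zero]⟩

theorem not_mem_perpLattice_sup_span (S : PiModularPair conj h π M e) {y : N} {u : O}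
    (hu : IsUnit u) (hye : h y e = algebraMap O K u) :
    y ∉ S.perpLattice ⊔ O ∙ (ϖ • e) := by
  obtain ⟨δ, -, hee⟩ := S.exists_isUnit_self
  intro hmem
  obtain ⟨m, hm, _, hv, rfl⟩ := mem_sup.1 hmem
  obtain ⟨a, rfl⟩ := mem_span_singleton.1 hv
  have : u = π * (a * δ) := IsFractionRing.injective O K <| by
    rw [← hye, S.isHermitianForm.add_left, (S.mem_perpLattice.1 hm).2, zero_add,
      ← algebraMap_smul K a, S.isHermitianForm.smul_left, S.isHermitianForm.smul_left, hee,
      map_mul, map_mul]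
    ring
  exact S.irreducible.not_isUnit (isUnit_of_dvd_unit (Dvd.intro _ this.symm) hu)

variable [IsDomain O] [IsDiscreteValuationRing O]

theorem conj_mem_range (S : PiModularPair conj h π M e) (c : O) :
    conj (algebraMap O K c) ∈ Set.range (algebraMap O K) := by
  obtain ⟨y, hy, u, hu, hey⟩ := S.exists_isUnit_apply_left
  -- `conj c = h(y, c u⁻¹ e)` with `y ∈ M` and `π (c u⁻¹ e) ∈ M`
  have hx : ϖ • algebraMap O K (c * ↑hu.unit⁻¹) • e ∈ M := by
    rw [smul_comm, algebraMap_smul]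
    exact M.smul_mem _ S.smul_mem
  have := S.apply_mem_range_of_smul_mem hy hx
  rwa [← S.isHermitianForm.conj_apply, S.isHermitianForm.smul_left, hey, ← map_mul, mul_assoc,
    IsUnit.val_inv_mul, mul_one] at this

theorem exists_isUnit_apply_right (S : PiModularPair conj h π M e) :
    ∃ y ∈ M, ∃ u : O, IsUnit u ∧ h y e = algebraMap O K u := by
  obtain ⟨y, hy, u, hu, hey⟩ := S.exists_isUnit_apply_left
  obtain ⟨v, hv⟩ := S.conj_mem_range u
  obtain ⟨w, hw⟩ := S.conj_mem_range ↑hu.unit⁻¹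
  refine ⟨y, hy, v, IsUnit.of_mul_eq_one w (IsFractionRing.injective O K ?_), ?_⟩
  · rw [map_mul, hv, hw, ← map_mul, ← map_mul, IsUnit.mul_val_inv, map_one, map_one]
  · rw [← S.isHermitianForm.conj_apply, hey, hv]

theorem piDualPerp_eq_projLattice (S : PiModularPair conj h π M e) :
    piDualPerp h π M e = S.projLattice := by
  have hH := S.isHermitianForm
  ext x
  constructor
  · rintro ⟨z, ⟨hze, hz⟩, rfl⟩
    obtain ⟨y₀, hy₀, u, hu, hy₀e⟩ := S.exists_isUnit_apply_right
    have hey₀ : h e y₀ ≠ 0 := by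
      rw [← hH.conj_apply, hy₀e, map_ne_zero, map_ne_zero_iff _ (IsFractionRing.injective O K)]
      exact hu.ne_zero
    -- correct `z` by a multiple of `e` so that it becomes orthogonal to `y₀` as well
    obtain ⟨γ, hγ⟩ : ∃ γ : K, h z y₀ = γ * h e y₀ := ⟨_, (div_mul_cancel₀ _ hey₀).symm⟩
    have hz' : ϖ • (z - γ • e) ∈ M := by
      refine (S.piModular _).1 fun y hy => ?_
      rw [S.eq_perpLattice_sup hy₀ hu hy₀e] at hy
      obtain ⟨m, hm, v, hv, rfl⟩ := mem_sup.1 hy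
      obtain ⟨a, rfl⟩ := mem_span_singleton.1 hv
      rw [hH.add_right, ← algebraMap_smul K a, hH.smul_right, hH.sub_left _ _ y₀, hH.smul_left,
        ← hγ, sub_self, mul_zero, add_zero, hH.sub_left, hH.smul_left,
        hH.eq_zero_comm (S.mem_perpLattice.1 hm).2, mul_zero, sub_zero]
      exact hz m (S.mem_perpLattice.1 hm)
    refine ⟨_, hz', ?_⟩
    rw [LinearMap.restrictScalars_apply, map_smul, map_sub, map_smul,
      hH.perpProj_self S.self_ne_zero, hH.perpProj_of_perp hze, smul_zero, sub_zero]
  · rintro ⟨w, hw, rfl⟩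
    refine ⟨ϖ⁻¹ • hH.perpProj e w, ⟨?_, fun y ⟨hy, hye⟩ => ?_⟩,
      (smul_inv_smul₀ S.uniformizer_ne_zero _).symm⟩
    · rw [hH.smul_left, hH.perpProj_perp S.self_ne_zero, mul_zero]
    · obtain ⟨c, hc⟩ := S.exists_eq_uniformizer_mul hw hy
      refine ⟨c, ?_⟩
      rw [hH.smul_left, hH.perpProj_apply, hH.sub_left, hH.smul_left, hH.eq_zero_comm hye,
        mul_zero, sub_zero, hc, inv_mul_cancel_left₀ S.uniformizer_ne_zero]

theorem piDualPerp_subset_dualSetInPerp (S : PiModularPair conj h π M e) :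
    piDualPerp h π M e ⊆ dualSetInPerp (O := O) h (piDualPerp h π M e) e := by
  rw [S.piDualPerp_eq_projLattice]
  rintro _ ⟨w, hw, rfl⟩
  exact S.mem_dualSetInPerp_projLattice.2 (S.smul_perpProj_mem_perpLattice hw)

theorem smul_mem_piDualPerp (S : PiModularPair conj h π M e) :
    ∀ x ∈ dualSetInPerp (O := O) h (piDualPerp h π M e) e, ϖ • x ∈ piDualPerp h π M e := by
  rw [S.piDualPerp_eq_projLattice]
  exact fun x hx => S.perpLattice_le_projLattice (S.mem_dualSetInPerp_projLattice.1 hx)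

theorem colengthOne_dualSetInPerp (S : PiModularPair conj h π M e) :
    colengthOne O (dualSetInPerp (O := O) h (piDualPerp h π M e) e)
      {x | ϖ • x ∈ piDualPerp h π M e} := by
  rw [S.piDualPerp_eq_projLattice]
  obtain ⟨y₀, hy₀, u, hu, hy₀e⟩ := S.exists_isUnit_apply_right
  have hsurj : Function.Surjective ((ϖ • LinearMap.id : N →ₗ[K] N).restrictScalars O) :=
    fun y => ⟨ϖ⁻¹ • y, smul_inv_smul₀ S.uniformizer_ne_zero y⟩
  convert (colengthOne_sup_span S.irreducible
    (by rw [← algebraMap_smul K]; exact S.smul_perpProj_mem_perpLattice hy₀)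
    (fun hmem => S.perpProj_not_mem hy₀ hu hy₀e (S.mem_perpLattice.1 hmem).1)).preimage hsurj
    using 1
  · exact Set.ext fun x => S.mem_dualSetInPerp_projLattice
  · rw [← S.projLattice_eq_perpLattice_sup hy₀ hu hy₀e]
    rfl

theorem colengthOne_smul_dualSetInPerp_sup (S : PiModularPair conj h π M e) :
    colengthOne O {x | ∃ z ∈ dualSetInPerp (O := O) h (piDualPerp h π M e) e, ∃ a : O,
      x = ϖ • z + a • (ϖ • e)} M := by
  rw [S.piDualPerp_eq_projLattice, S.setOf_smul_add_smul_eq]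
  obtain ⟨y₀, hy₀, u, hu, hy₀e⟩ := S.exists_isUnit_apply_right
  have hM : S.perpLattice ⊔ O ∙ (ϖ • e) ⊔ O ∙ y₀ = M := by
    refine le_antisymm (sup_le (sup_le inf_le_left ((span_singleton_le_iff_mem _ _).2 S.smul_mem))
      ((span_singleton_le_iff_mem _ _).2 hy₀)) ?_
    conv_lhs => rw [S.eq_perpLattice_sup hy₀ hu hy₀e]
    exact sup_le_sup_right le_sup_left _
  have hπy₀ : π • y₀ ∈ S.perpLattice ⊔ O ∙ (ϖ • e) := by
    obtain ⟨c, hc⟩ := S.exists_perpProj_eq_sub_smul hy₀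
    refine mem_sup.2 ⟨_, S.smul_perpProj_mem_perpLattice hy₀, c • ϖ • e,
      mem_span_singleton.2 ⟨c, rfl⟩, ?_⟩
    rw [hc, smul_sub, smul_comm _ c e, sub_add_cancel, algebraMap_smul]
  have := colengthOne_sup_span S.irreducible hπy₀ (S.not_mem_perpLattice_sup_span hu hy₀e)
  rwa [hM] at this

theorem colengthOne_sup_span_self (S : PiModularPair conj h π M e) :
    colengthOne O M {x | ∃ z ∈ piDualPerp h π M e, ∃ a : O, x = z + a • e} := by
  rw [S.piDualPerp_eq_projLattice]
  have hB : {x | ∃ z ∈ (S.projLattice : Set N), ∃ a : O, x = z + a • e} =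
      (M ⊔ O ∙ e : Submodule O N) := by
    ext x
    simp only [Set.mem_ofPred_eq, SetLike.mem_coe, mem_sup, mem_span_singleton]
    constructor
    · rintro ⟨_, ⟨w, hw, rfl⟩, a, rfl⟩
      obtain ⟨c, hc⟩ := S.exists_perpProj_eq_sub_smul hw
      refine ⟨w, hw, (a - c) • e, ⟨_, rfl⟩, ?_⟩
      rw [LinearMap.restrictScalars_apply, hc, sub_smul]
      abel
    · rintro ⟨w, hw, _, ⟨a, rfl⟩, rfl⟩
      obtain ⟨c, hc⟩ := S.exists_perpProj_eq_sub_smul hw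
      refine ⟨_, S.perpProj_mem_projLattice hw, a + c, ?_⟩
      rw [hc, add_smul]
      abel
  rw [hB]
  exact colengthOne_sup_span S.irreducible (by rw [← algebraMap_smul K]; exact S.smul_mem)
    S.not_mem

section Verschiebung

variable {τ : K →+* K} (V : N →ₛₗ[τ] N)

theorem map_mem_piDualPerp (S : PiModularPair conj h π M e)
    (hτ : ∀ a : O, τ (algebraMap O K a) ∈ Set.range (algebraMap O K))
    (hVM : ∀ x ∈ M, V x ∈ M) (hVe : V e ∈ M) (hVW : ∀ x, h x e = 0 → h (V x) e = 0) :
    ∀ x ∈ piDualPerp h π M e, V x ∈ piDualPerp h π M e := by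
  rw [S.piDualPerp_eq_projLattice]
  rintro _ ⟨w, hw, rfl⟩
  obtain ⟨c, hc⟩ := S.exists_perpProj_eq_sub_smul hw
  obtain ⟨d, hd⟩ := hτ c
  refine S.perpLattice_le_projLattice (S.mem_perpLattice.2 ⟨?_, hVW _
    (S.isHermitianForm.perpProj_perp S.self_ne_zero w)⟩)
  rw [LinearMap.restrictScalars_apply, hc, map_sub, ← algebraMap_smul K c e, map_smulₛₗ, ← hd,
    algebraMap_smul]
  exact M.sub_mem (hVM w hw) (M.smul_mem d hVe)

theorem exists_smul_eq_map_of_piDualPerp (S : PiModularPair conj h π M e) {b : K}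
    (hVe : V e = b • e) (hVW : ∀ x, h x e = 0 → h (V x) e = 0) {c : K}
    (hc : ∀ w ∈ M, ∃ t ∈ M, c • w = V t) :
    ∀ x ∈ piDualPerp h π M e, ∃ y ∈ piDualPerp h π M e, c • x = V y := by
  rw [S.piDualPerp_eq_projLattice]
  rintro _ ⟨w, hw, rfl⟩
  obtain ⟨t, ht, hwt⟩ := hc w hw
  exact ⟨_, S.perpProj_mem_projLattice ht,
    S.isHermitianForm.smul_perpProj_eq_of_smul_eq S.self_ne_zero V hVe hVW hwt⟩

theorem colengthLeOne_map_piDualPerp (S : PiModularPair conj h π M e)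
    (hτ : ∀ a : O, ∃ s : O, τ (algebraMap O K s) = algebraMap O K a) {b : K}
    (hVe : V e = b • e) (hVW : ∀ x, h x e = 0 → h (V x) e = 0)
    (VM : Submodule O N) (hVM : ∀ x, x ∈ VM ↔ ∃ y ∈ M, x = V y)
    (hcolen : colengthLeOne O (VM : Set N) {x | ∃ u ∈ VM, ∃ z ∈ M, x = u + π • z}) :
    colengthLeOne O {x | ∃ u ∈ piDualPerp h π M e, x = V u}
      {x | ∃ u ∈ piDualPerp h π M e, ∃ z ∈ piDualPerp h π M e, x = V u + ϖ • z} := by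
  rw [S.piDualPerp_eq_projLattice]
  have hπV : ∀ v ∈ M, π • v ∈ VM →
      ϖ • S.isHermitianForm.perpProj e v ∈ {x | ∃ u ∈ S.projLattice, x = V u} := by
    intro v hv hπv
    obtain ⟨t, ht, hvt⟩ := (hVM _).1 hπv
    exact ⟨_, S.perpProj_mem_projLattice ht, S.isHermitianForm.smul_perpProj_eq_of_smul_eq
      S.self_ne_zero V hVe hVW (by rw [algebraMap_smul, hvt])⟩
  refine ⟨fun _ ⟨u, hu, hx⟩ => ⟨u, hu, 0, zero_mem _, by rw [hx, smul_zero, add_zero]⟩, ?_⟩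
  rintro x ⟨u, hu, _, ⟨w, hw, rfl⟩, rfl⟩ hx y ⟨u', hu', _, ⟨w', hw', rfl⟩, rfl⟩
  have hπw : π • w ∉ VM := fun hmem => hx <| by
    obtain ⟨t, ht, htw⟩ := hπV w hw hmem
    exact ⟨u + t, add_mem hu ht, by rw [map_add, ← htw]; rfl⟩
  obtain ⟨a, ha⟩ := hcolen.2 _ ⟨0, zero_mem _, w, hw, (zero_add _).symm⟩ hπw _
    ⟨0, zero_mem _, w', hw', (zero_add _).symm⟩
  rw [smul_comm a π, ← smul_sub] at ha
  obtain ⟨t, ht, htw⟩ := hπV _ (M.sub_mem hw' (M.smul_mem a hw)) ha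
  obtain ⟨s, hs⟩ := hτ a
  refine ⟨a, u' - s • u + t,
    S.projLattice.add_mem (S.projLattice.sub_mem hu' (S.projLattice.smul_mem s hu)) ht, ?_⟩
  simp only [LinearMap.restrictScalars_apply]
  rw [map_add, map_sub, ← htw, ← algebraMap_smul K s u, map_smulₛₗ, hs, algebraMap_smul K a,
    map_sub, LinearMap.map_smul_of_tower, smul_sub, smul_comm (algebraMap O K π) a, smul_add]
  abel

end Verschiebung

end PiModularPair

theorem stmt_15_general
    -- the field K with involution `conj`, Frobenius `frob`, ring of integers O_K
    {K O : Type*} [Field K] [CommRing O] [IsDomain O] [IsDiscreteValuationRing O]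
    [Algebra O K] [IsFractionRing O K]
    (conj : K ≃+* K) (hconjinv : ∀ x : K, conj (conj x) = x)
    (frob : K ≃+* K)
    (hfrobO : ∀ a : O, ∃ b : O, frob (algebraMap O K a) = algebraMap O K b)
    (hfrobinvO : ∀ a : O, ∃ b : O, frob.symm (algebraMap O K a) = algebraMap O K b)
    (π : O) (hπ : Irreducible π)
    (hconjπ : conj (algebraMap O K π) = - algebraMap O K π)
    (hfrobπ : frob (algebraMap O K π) = algebraMap O K π)
    -- the isocrystal N (of dimension n = 2m ≥ 4) with alternating form and F, V
    (m : ℕ)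
    {N : Type*} [AddCommGroup N] [Module K N]
    [Module O N] [IsScalarTower O K N]
    (form : N → N → K)
    (haddl : ∀ x y z : N, form (x + y) z = form x z + form y z)
    (haddr : ∀ x y z : N, form x (y + z) = form x y + form x z)
    (hK₀ : ∀ (a : K) (x y : N), conj a = a → form (a • x) y = a * form x y)
    (hswap : ∀ (a : K) (x y : N), form (a • x) y = form x (conj a • y))
    (halt : ∀ x : N, form x x = 0)
    (hval : ∀ x y : N, conj (form x y) = form x y)
    (Frob Ver : N → N)
    (hVadd : ∀ x y : N, Ver (x + y) = Ver x + Ver y)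
    (hFsemi : ∀ (a : K) (x : N), Frob (a • x) = frob a • Frob x)
    (hVsemi : ∀ (a : K) (x : N), Ver (a • x) = frob.symm a • Ver x)
    (hFform : ∀ x y : N, form (Frob x) y = frob (form x (Ver y)))
    -- M: a π-modular lattice admitting a standard normal basis
    (M : Submodule O N)
    (b : Module.Basis (Fin m × Fin 2) O M)
    (hπmod : ∀ x : N,
      (∀ y ∈ M, hermOf (algebraMap O K π) form x y ∈ Set.range (algebraMap O K)) ↔
      (algebraMap O K π) • x ∈ M)
    -- VM, with π₀M ⊆ VM ⊆ M, length(M/VM) = n, VM of colength 1 in VM + πM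
    (Vsub : Submodule O N) (hVsub : ∀ x : N, x ∈ Vsub ↔ ∃ y ∈ M, x = Ver y)
    (hVM : Vsub ≤ M)
    (hπ₀M : ∀ x ∈ M, ((algebraMap O K π) ^ 2) • x ∈ Vsub)
    (hcolen : colengthOne O (Vsub : Set N)
      {x : N | ∃ u ∈ Vsub, ∃ z ∈ M, x = u + π • z})
    -- the vector e: h(e,e) = δ with δ ∈ O_{K₀}^× and σ(δ) = -δ, Ve = Fe = -πe,
    -- πe ∈ M, e ∉ M
    (e : N) (δ : O) (hδu : IsUnit δ)
    (hee : hermOf (algebraMap O K π) form e e = algebraMap O K δ)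
    (hVe : Ver e = -((algebraMap O K π) • e))
    (hFe : Frob e = -((algebraMap O K π) • e))
    (hπe : (algebraMap O K π) • e ∈ M) (heM : e ∉ M) :
    -- conclusions about L = π·(M ∩ W)^*, W = e^⊥
    let hh := hermOf (algebraMap O K π) form
    let D := dualSetInPerp (O := O) hh {y : N | y ∈ M ∧ hh y e = 0} e
    let Lset := {x : N | ∃ z ∈ D, x = (algebraMap O K π) • z}
    let Dstar := dualSetInPerp (O := O) hh Lset e
    -- L is almost π-modular in W: L ⊆ L* ⊆ π^{-1}L with L* of colength 1 in π^{-1}L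
    (Lset ⊆ Dstar) ∧
    (∀ x ∈ Dstar, (algebraMap O K π) • x ∈ Lset) ∧
    colengthOne O Dstar {x : N | (algebraMap O K π) • x ∈ Lset} ∧
    -- πL* ⊞ O_K·(πe) has colength 1 in M
    colengthOne O
      {x : N | ∃ z ∈ Dstar, ∃ a : O,
        x = (algebraMap O K π) • z + a • ((algebraMap O K π) • e)}
      (M : Set N) ∧
    -- M has colength 1 in L ⊞ O_K·e
    colengthOne O (M : Set N)
      {x : N | ∃ z ∈ Lset, ∃ a : O, x = z + a • e} ∧
    -- VL ⊆ L
    (∀ x ∈ Lset, Ver x ∈ Lset) ∧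
    -- π₀L ⊆ VL
    (∀ x ∈ Lset, ∃ y ∈ Lset, ((algebraMap O K π) ^ 2) • x = Ver y) ∧
    -- VL has colength at most 1 in VL + πL
    colengthLeOne O
      {x : N | ∃ u ∈ Lset, x = Ver u}
      {x : N | ∃ u ∈ Lset, ∃ z ∈ Lset, x = Ver u + (algebraMap O K π) • z} := by
  intro hh D Lset Dstar
  have hq0 : algebraMap O K π ≠ 0 := (map_ne_zero_iff _ (IsFractionRing.injective O K)).2 hπ.ne_zero
  have h2 : (2 : K) ≠ 0 := two_ne_zero_of_hermOf_ne_zero hconjπ hK₀ halt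
    (hee ▸ (map_ne_zero_iff _ (IsFractionRing.injective O K)).2 hδu.ne_zero)
  have hH : IsHermitianForm conj hh := ⟨hermOf_add_left haddl,
    hermOf_smul_left hconjinv hconjπ hq0 h2 haddl hK₀,
    conj_hermOf haddl haddr hK₀ hswap halt hval hconjπ⟩
  have S : PiModularPair conj hh π M e := ⟨hH, hπ, hconjπ, hπmod, ⟨δ, hδu, hee⟩, hπe, heM⟩
  let V : N →ₛₗ[(frob.symm : K →+* K)] N := ⟨⟨Ver, hVadd⟩, hVsemi⟩
  have hVe' : V e = (-algebraMap O K π) • e := hVe.trans (neg_smul _ _).symm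
  have hVW : ∀ x, hh x e = 0 → hh (V x) e = 0 := fun x =>
    hH.apply_eq_zero_of_adjoint (hermOf_frob_left (σ := frob) hFsemi hFform hfrobπ)
      (hFe.trans (neg_smul _ _).symm)
  exact ⟨S.piDualPerp_subset_dualSetInPerp, S.smul_mem_piDualPerp, S.colengthOne_dualSetInPerp,
    S.colengthOne_smul_dualSetInPerp_sup, S.colengthOne_sup_span_self,
    S.map_mem_piDualPerp V (fun a => (hfrobinvO a).imp fun _ => Eq.symm)
      (fun x hx => hVM ((hVsub _).2 ⟨x, hx, rfl⟩))
      (show Ver e ∈ M by rw [hVe]; exact M.neg_mem hπe) hVW,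
    S.exists_smul_eq_map_of_piDualPerp V hVe' hVW fun w hw => (hVsub _).1 (hπ₀M w hw),
    S.colengthLeOne_map_piDualPerp V
      (fun a => (hfrobO a).imp fun _ hb => by rw [← hb]; exact frob.symm_apply_apply _)
      hVe' hVW Vsub hVsub ⟨hcolen.1, hcolen.2.2⟩⟩

theorem stmt_15
    -- the field K with involution `conj`, Frobenius `frob`, ring of integers O_K
    {K O : Type*} [Field K] [CommRing O] [IsDomain O] [IsDiscreteValuationRing O]
    [Algebra O K] [IsFractionRing O K]
    (conj : K ≃+* K) (hconjinv : ∀ x : K, conj (conj x) = x)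
    (hconjne : conj ≠ RingEquiv.refl K)
    (frob : K ≃+* K)
    (hfrobO : ∀ a : O, ∃ b : O, frob (algebraMap O K a) = algebraMap O K b)
    (hfrobinvO : ∀ a : O, ∃ b : O, frob.symm (algebraMap O K a) = algebraMap O K b)
    (hcomm : ∀ x : K, frob (conj x) = conj (frob x))
    (π : O) (hπ : Irreducible π)
    (hconjπ : conj (algebraMap O K π) = - algebraMap O K π)
    (hfrobπ : frob (algebraMap O K π) = algebraMap O K π)
    -- the isocrystal N (of dimension n = 2m ≥ 4) with alternating form and F, V
    (m : ℕ) (hm : 2 ≤ m)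
    {N : Type*} [AddCommGroup N] [Module K N] [FiniteDimensional K N]
    [Module O N] [IsScalarTower O K N]
    (hdim : Module.finrank K N = 2 * m)
    (form : N → N → K)
    (haddl : ∀ x y z : N, form (x + y) z = form x z + form y z)
    (haddr : ∀ x y z : N, form x (y + z) = form x y + form x z)
    (hK₀ : ∀ (a : K) (x y : N), conj a = a → form (a • x) y = a * form x y)
    (hswap : ∀ (a : K) (x y : N), form (a • x) y = form x (conj a • y))
    (halt : ∀ x : N, form x x = 0)
    (hval : ∀ x y : N, conj (form x y) = form x y)
    (hnd : ∀ x : N, x ≠ 0 → ∃ y : N, form x y ≠ 0)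
    (Frob Ver : N → N)
    (hFadd : ∀ x y : N, Frob (x + y) = Frob x + Frob y)
    (hVadd : ∀ x y : N, Ver (x + y) = Ver x + Ver y)
    (hFbij : Function.Bijective Frob) (hVbij : Function.Bijective Ver)
    (hFsemi : ∀ (a : K) (x : N), Frob (a • x) = frob a • Frob x)
    (hVsemi : ∀ (a : K) (x : N), Ver (a • x) = frob.symm a • Ver x)
    (hFV : ∀ x : N, Frob (Ver x) = ((algebraMap O K π) ^ 2) • x)
    (hVF : ∀ x : N, Ver (Frob x) = ((algebraMap O K π) ^ 2) • x)
    (hFform : ∀ x y : N, form (Frob x) y = frob (form x (Ver y)))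
    -- M: a π-modular lattice admitting a standard normal basis
    (M : Submodule O N)
    (b : Module.Basis (Fin m × Fin 2) O M)
    (hb : ∀ i j, hermOf (algebraMap O K π) form (b i : N) (b j : N) =
      piGram (algebraMap O K π) m i j)
    (hπmod : ∀ x : N,
      (∀ y ∈ M, hermOf (algebraMap O K π) form x y ∈ Set.range (algebraMap O K)) ↔
      (algebraMap O K π) • x ∈ M)
    -- VM, with π₀M ⊆ VM ⊆ M, length(M/VM) = n, VM of colength 1 in VM + πM
    (Vsub : Submodule O N) (hVsub : ∀ x : N, x ∈ Vsub ↔ ∃ y ∈ M, x = Ver y)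
    (hVM : Vsub ≤ M)
    (hπ₀M : ∀ x ∈ M, ((algebraMap O K π) ^ 2) • x ∈ Vsub)
    (hlen : moduleLengthEq O (↥M ⧸ (Vsub.comap M.subtype)) (2 * m))
    (hcolen : colengthOne O (Vsub : Set N)
      {x : N | ∃ u ∈ Vsub, ∃ z ∈ M, x = u + π • z})
    -- the vector e: h(e,e) = δ with δ ∈ O_{K₀}^× and σ(δ) = -δ, Ve = Fe = -πe,
    -- πe ∈ M, e ∉ M
    (e : N) (δ : O) (hδu : IsUnit δ)
    (hδfix : conj (algebraMap O K δ) = algebraMap O K δ)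
    (hδfrob : frob (algebraMap O K δ) = - algebraMap O K δ)
    (hee : hermOf (algebraMap O K π) form e e = algebraMap O K δ)
    (hVe : Ver e = -((algebraMap O K π) • e))
    (hFe : Frob e = -((algebraMap O K π) • e))
    (hπe : (algebraMap O K π) • e ∈ M) (heM : e ∉ M) :
    -- conclusions about L = π·(M ∩ W)^*, W = e^⊥
    let hh := hermOf (algebraMap O K π) form
    let D := dualSetInPerp (O := O) hh {y : N | y ∈ M ∧ hh y e = 0} e
    let Lset := {x : N | ∃ z ∈ D, x = (algebraMap O K π) • z}
    let Dstar := dualSetInPerp (O := O) hh Lset e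
    -- L is almost π-modular in W: L ⊆ L* ⊆ π^{-1}L with L* of colength 1 in π^{-1}L
    (Lset ⊆ Dstar) ∧
    (∀ x ∈ Dstar, (algebraMap O K π) • x ∈ Lset) ∧
    colengthOne O Dstar {x : N | (algebraMap O K π) • x ∈ Lset} ∧
    -- πL* ⊞ O_K·(πe) has colength 1 in M
    colengthOne O
      {x : N | ∃ z ∈ Dstar, ∃ a : O,
        x = (algebraMap O K π) • z + a • ((algebraMap O K π) • e)}
      (M : Set N) ∧
    -- M has colength 1 in L ⊞ O_K·e
    colengthOne O (M : Set N)
      {x : N | ∃ z ∈ Lset, ∃ a : O, x = z + a • e} ∧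
    -- VL ⊆ L
    (∀ x ∈ Lset, Ver x ∈ Lset) ∧
    -- π₀L ⊆ VL
    (∀ x ∈ Lset, ∃ y ∈ Lset, ((algebraMap O K π) ^ 2) • x = Ver y) ∧
    -- VL has colength at most 1 in VL + πL
    colengthLeOne O
      {x : N | ∃ u ∈ Lset, x = Ver u}
      {x : N | ∃ u ∈ Lset, ∃ z ∈ Lset, x = Ver u + (algebraMap O K π) • z} :=
  stmt_15_general conj hconjinv frob hfrobO hfrobinvO π hπ hconjπ hfrobπ m form haddl haddr hK₀
    hswap halt hval Frob Ver hVadd hFsemi hVsemi hFform M b hπmod Vsub hVsub hVM hπ₀M hcolen e δ hδu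
    hee hVe hFe hπe heM
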